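/- Fix q ∈ (0,1) and interlacing real numbers x₁ < y₁ < ⋯ < y_m < x_{m+1}, with associated weights μ_k = μ_k(q), k = 1,…,m+1. Fix a real x > x_{m+1}, and for t ≥ 0 small enough that x > x_{m+1} + √(μ_k t) for all k, define R(t) = (1−q) · Π_{i=1}^{m+1}(1 − q^{x−x_i}) · Π_{i=1}^{m}(1 − q^{x−y_i}) / Π_{i=1}^{m+1}[ (1 − q^{x−x_i−√(μ_i t)})·(1 − q^{x−x_i+√(μ_i t)}) ]. Then R has a right derivative at t = 0 given by R'(0⁺) = (ln q)² · ( Σ_{k=1}^{m+1} μ_k·q^{x−x_k}/(1 − q^{x−x_k})² ) · R(0), and moreover d/dx[R(0)] + ((1−q)/ln(q^{−1})) · R(0)^{−1} · R'(0⁺) = 0; that is, the q-deformed R-function of a growing rectangular diagram satisfies the q-deformed Burgers equation infinitesimally at t = 0. -/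

import Mathlib

open Finset

/-- The weights `μ_k(q)` associated with interlacing sequences
`x₁ < y₁ < x₂ < ⋯ < x_m < y_m < x_{m+1}` (1-based indexing):
`μ_k(q) = Π_{i=1}^{k−1} (1−q^{x_k−y_i})/(1−q^{x_k−x_i}) ·
Π_{i=k+1}^{m+1} (1−q^{x_k−y_{i−1}})/(1−q^{x_k−x_i})`.
Here `q ^ t` is the real power `exp (t * Real.log q)`. -/
noncomputable def muW (q : ℝ) (m : ℕ) (x y : ℕ → ℝ) (k : ℕ) : ℝ :=
  (∏ i ∈ Finset.Icc 1 (k - 1), (1 - q ^ (x k - y i)) / (1 - q ^ (x k - x i))) *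
  (∏ i ∈ Finset.Icc (k + 1) (m + 1), (1 - q ^ (x k - y (i - 1))) / (1 - q ^ (x k - x i)))

/-- The q-deformed R-function of the rectangular diagram grown for time `t`: above each
minimum `x_k` a square of area `μ_k(q)·t` is attached, giving
`R(X,t) = (1−q)·Π(1 − q^{X−x_i})·Π(1 − q^{X−y_i}) /
Π[(1 − q^{X−x_i−√(μ_i t)})(1 − q^{X−x_i+√(μ_i t)})]`. -/
noncomputable def Rgrow (q : ℝ) (m : ℕ) (x y : ℕ → ℝ) (X t : ℝ) : ℝ :=
  (1 - q) * (∏ i ∈ Finset.Icc 1 (m + 1), (1 - q ^ (X - x i))) *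
      (∏ i ∈ Finset.Icc 1 m, (1 - q ^ (X - y i))) /
    ∏ i ∈ Finset.Icc 1 (m + 1),
      ((1 - q ^ (X - x i - Real.sqrt (muW q m x y i * t))) *
        (1 - q ^ (X - x i + Real.sqrt (muW q m x y i * t))))

/-! Writing `s = √(μ_i t)`, each factor of the denominator of `R` is
`(1 - q^{X-x_i-s})(1 - q^{X-x_i+s}) = (1 - q^{X-x_i})² - q^{X-x_i} (2 sinh (s log q / 2))²`,
and `(2 sinh (s log q / 2))² = μ_i t (log q)² + o(t)`; so its right derivative at `t = 0` is
`-q^{X-x_i} μ_i (log q)²`, and the logarithmic derivative of `R` gives `R'(0⁺)`.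

In the variable `z = q^X` the weights `μ_k` are the coefficients of the partial fraction expansion
`∏ (1 - z/q^{y_i}) / ∏ (1 - z/q^{x_i}) = ∑ μ_k / (1 - z/q^{x_k})`, obtained by Lagrange
interpolation of the numerator at the nodes `q^{x_k}`. Hence
`R(X,0) = (1-q) ∑ μ_k / (1 - q^{X-x_k})`, whose `X`-derivative is `(1-q) log q` times the sum
appearing in `R'(0⁺) / R(X,0)`. -/

open Real Filter Topology

theorem prod_one_sub_div_div_prod_one_sub_div_eq_sum {K ι : Type*} [Field K] [DecidableEq ι]
    {s t : Finset ι} {u v : ι → K} (hu : Set.InjOn u s) (hu0 : ∀ i ∈ s, u i ≠ 0)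
    (hts : #t < #s) {z : K} (hz : ∀ i ∈ s, z ≠ u i) :
    (∏ i ∈ t, (1 - z / v i)) / ∏ i ∈ s, (1 - z / u i) =
      ∑ k ∈ s, (∏ i ∈ t, (1 - u k / v i)) / (∏ j ∈ s.erase k, (1 - u k / u j)) /
        (1 - z / u k) := by
  set P : Polynomial K := ∏ i ∈ t, (1 - Polynomial.C (v i)⁻¹ * Polynomial.X)
  have hP : ∀ w, P.eval w = ∏ i ∈ t, (1 - w / v i) := fun w => by
    simp [P, Polynomial.eval_prod, div_eq_inv_mul]
  have hdeg : P.degree < #s := by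
    refine Polynomial.degree_le_natDegree.trans_lt ?_
    have : P.natDegree ≤ #t := by
      refine (Polynomial.natDegree_prod_le _ _).trans ?_
      refine (sum_le_sum (g := fun _ => 1) fun i _ => ?_).trans_eq (by simp)
      exact (Polynomial.natDegree_sub_le _ _).trans
        (max_le (by simp) ((Polynomial.natDegree_C_mul_le _ _).trans (by simp)))
    exact_mod_cast this.trans_lt hts
  have hinterp := congrArg (Polynomial.eval z) (Lagrange.eq_interpolate hu hdeg)
  rw [Lagrange.eval_interpolate_not_at_node _ hz, Lagrange.eval_nodal] at hinterp
  simp only [hP] at hinterp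
  -- the factors `-(u j)⁻¹` turn `z - u j` into `1 - z / u j` and cancel between the two sides
  have hsplit : ∀ w, ∀ j ∈ s, 1 - w / u j = (w - u j) * -(u j)⁻¹ := fun w j hj => by
    field_simp [hu0 j hj]; ring
  have hnodal : ∏ i ∈ s, (z - u i) ≠ 0 :=
    prod_ne_zero_iff.2 fun i hi => sub_ne_zero.2 (hz i hi)
  rw [hinterp, prod_congr rfl (hsplit z), prod_mul_distrib, mul_div_mul_left _ _ hnodal, sum_div]
  refine sum_congr rfl fun k hk => ?_
  have hne : ∏ j ∈ s.erase k, (u k - u j) ≠ 0 := prod_ne_zero_iff.2 fun j hj =>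
    sub_ne_zero.2 fun h => (ne_of_mem_erase hj) (hu (mem_of_mem_erase hj) hk h.symm)
  have hc : ∏ j ∈ s.erase k, -(u j)⁻¹ ≠ 0 :=
    prod_ne_zero_iff.2 fun j hj => neg_ne_zero.2 (inv_ne_zero (hu0 j (mem_of_mem_erase hj)))
  rw [prod_congr rfl fun j hj => hsplit (u k) j (mem_of_mem_erase hj), prod_mul_distrib,
    ← mul_prod_erase s _ hk, hsplit z k hk, Lagrange.nodalWeight, prod_inv_distrib]
  field_simp [hu0 k hk, sub_ne_zero.2 (hz k hk)]

theorem one_sub_rpow_pos {q : ℝ} (hq0 : 0 < q) (hq1 : q < 1) {a : ℝ} (ha : 0 < a) :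
    0 < 1 - q ^ a :=
  sub_pos.2 (rpow_lt_one hq0.le hq1 ha)

theorem one_sub_rpow_neg {q : ℝ} (hq0 : 0 < q) (hq1 : q < 1) {a : ℝ} (ha : a < 0) :
    1 - q ^ a < 0 :=
  sub_neg.2 (one_lt_rpow_of_pos_of_lt_one_of_neg hq0 hq1 ha)

theorem one_sub_rpow_sub_mul_one_sub_rpow_add {q : ℝ} (hq : 0 < q) (a s : ℝ) :
    (1 - q ^ (a - s)) * (1 - q ^ (a + s)) =
      (1 - q ^ a) ^ 2 - q ^ a * (2 * sinh (s * log q / 2)) ^ 2 := by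
  have hs : q ^ s = exp (s * log q / 2) ^ 2 := by
    rw [rpow_def_of_pos hq, ← exp_nat_mul]; ring_nf
  rw [rpow_sub hq, rpow_add hq, hs, sinh_eq, exp_neg]
  have := exp_pos (s * log q / 2)
  field_simp
  ring

theorem hasDerivWithinAt_sq_comp_sqrt {h : ℝ → ℝ} {h' : ℝ} (hh : HasDerivAt h h' 0)
    (h0 : h 0 = 0) : HasDerivWithinAt (fun t => h √t ^ 2) (h' ^ 2) (Set.Ici 0) 0 := by
  rw [hasDerivWithinAt_iff_tendsto_slope, Set.Ici_sdiff_left]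
  have hsqrt : Tendsto (fun t => √t) (𝓝[>] 0) (𝓝[>] 0) := by
    refine tendsto_nhdsWithin_iff.2 ⟨?_, ?_⟩
    · simpa using continuous_sqrt.continuousWithinAt.tendsto (x := 0) (s := Set.Ioi 0)
    · filter_upwards [self_mem_nhdsWithin] with t ht using sqrt_pos.2 ht
  -- the slope at `t > 0` is `(h √t / √t) ^ 2`
  refine ((hh.tendsto_slope_zero_right.comp hsqrt).pow 2).congr' ?_
  filter_upwards [self_mem_nhdsWithin] with t ht
  simp [slope_def_field, h0, mul_pow, sq_sqrt (le_of_lt ht), div_eq_inv_mul]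

theorem hasDerivWithinAt_sq_comp_sqrt_mul {h : ℝ → ℝ} {h' c : ℝ} (hh : HasDerivAt h h' 0)
    (h0 : h 0 = 0) (hc : 0 ≤ c) :
    HasDerivWithinAt (fun t => h √(c * t) ^ 2) (c * h' ^ 2) (Set.Ici 0) 0 := by
  have hmaps : Set.MapsTo (c * ·) (Set.Ici 0) (Set.Ici 0) := fun t ht => mul_nonneg hc ht
  have := (hasDerivWithinAt_sq_comp_sqrt hh h0).comp_of_eq 0
    ((hasDerivAt_id' 0).const_mul c).hasDerivWithinAt hmaps (by simp)
  exact this.congr_deriv (by ring)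

theorem hasDerivWithinAt_one_sub_rpow_sub_sqrt_mul {q : ℝ} (hq : 0 < q) (a : ℝ) {μ : ℝ}
    (hμ : 0 ≤ μ) :
    HasDerivWithinAt (fun t => (1 - q ^ (a - √(μ * t))) * (1 - q ^ (a + √(μ * t))))
      (-(q ^ a * μ * log q ^ 2)) (Set.Ici 0) 0 := by
  have hsinh : HasDerivAt (fun s => 2 * sinh (s * log q / 2)) (log q) 0 := by
    have := ((hasDerivAt_mul_const (x := (0 : ℝ)) (log q)).div_const 2).sinh.const_mul 2
    exact this.congr_deriv (by simp; ring)
  have := ((hasDerivWithinAt_sq_comp_sqrt_mul hsinh (by simp) hμ).const_mul (q ^ a)).const_sub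
    ((1 - q ^ a) ^ 2)
  simp only [← one_sub_rpow_sub_mul_one_sub_rpow_add hq] at this
  exact this.congr_deriv (by ring)

theorem HasDerivWithinAt.const_div_finset_prod {ι 𝕜 : Type*} [NontriviallyNormedField 𝕜]
    [DecidableEq ι] {s : Finset ι} {f : ι → 𝕜 → 𝕜} {f' : ι → 𝕜} {S : Set 𝕜} {a : 𝕜} (C : 𝕜)
    (hf : ∀ i ∈ s, HasDerivWithinAt (f i) (f' i) S a) (hf0 : ∀ i ∈ s, f i a ≠ 0) :
    HasDerivWithinAt (fun t => C / ∏ i ∈ s, f i t)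
      (-(C / ∏ i ∈ s, f i a) * ∑ i ∈ s, f' i / f i a) S a := by
  have hP0 : ∏ i ∈ s, f i a ≠ 0 := prod_ne_zero_iff.2 hf0
  refine ((hasDerivWithinAt_const a S C).div (HasDerivWithinAt.fun_finsetProd hf)
    hP0).congr_deriv ?_
  have hlogDeriv : ∑ i ∈ s, (∏ j ∈ s.erase i, f j a) • f' i =
      (∏ i ∈ s, f i a) * ∑ i ∈ s, f' i / f i a := by
    rw [mul_sum]
    refine sum_congr rfl fun i hi => ?_
    rw [← mul_prod_erase s _ hi, smul_eq_mul]
    field_simp [hf0 i hi]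
  rw [hlogDeriv]
  field_simp
  ring

theorem hasDerivAt_div_one_sub_rpow_sub {q : ℝ} (hq : 0 < q) (μ a X : ℝ)
    (h : q ^ (X - a) ≠ 1) :
    HasDerivAt (fun X => μ / (1 - q ^ (X - a)))
      (log q * (μ * q ^ (X - a) / (1 - q ^ (X - a)) ^ 2)) X := by
  have hpow : HasDerivAt (fun X => q ^ (X - a)) (q ^ (X - a) * log q) X :=
    (hasStrictDerivAt_const_rpow hq (X - a)).hasDerivAt.comp_sub_const X a
  refine ((hasDerivAt_const X μ).div (hpow.const_sub 1) (sub_ne_zero.2 h.symm)).congr_deriv ?_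
  ring

section Interlacing

variable {q : ℝ} {m : ℕ} {x y : ℕ → ℝ}

theorem strictMonoOn_of_interlacing (hxy : ∀ i, 1 ≤ i → i ≤ m → x i < y i)
    (hyx : ∀ i, 1 ≤ i → i ≤ m → y i < x (i + 1)) : StrictMonoOn x (Set.Icc 1 (m + 1)) :=
  strictMonoOn_of_lt_add_one Set.ordConnected_Icc fun i _ hi hi' =>
    (hxy i hi.1 (by simp at hi'; omega)).trans (hyx i hi.1 (by simp at hi'; omega))

theorem muW_eq {k : ℕ} (hk1 : 1 ≤ k) (hk : k ≤ m + 1) :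
    muW q m x y k = (∏ i ∈ Icc 1 m, (1 - q ^ (x k - y i))) /
      ∏ j ∈ (Icc 1 (m + 1)).erase k, (1 - q ^ (x k - x j)) := by
  have hx : (Icc 1 (m + 1)).erase k = Icc 1 (k - 1) ∪ Icc (k + 1) (m + 1) := by
    ext i; simp only [mem_erase, mem_Icc, mem_union]; omega
  have hxd : Disjoint (Icc 1 (k - 1)) (Icc (k + 1) (m + 1)) :=
    disjoint_left.2 fun i hi hi' => by simp only [mem_Icc] at hi hi'; omega
  have hy : Icc 1 m = Icc 1 (k - 1) ∪ Icc k m := by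
    ext i; simp only [mem_Icc, mem_union]; omega
  have hyd : Disjoint (Icc 1 (k - 1)) (Icc k m) :=
    disjoint_left.2 fun i hi hi' => by simp only [mem_Icc] at hi hi'; omega
  have hshift : ∏ i ∈ Icc k m, (1 - q ^ (x k - y i)) =
      ∏ i ∈ Icc (k + 1) (m + 1), (1 - q ^ (x k - y (i - 1))) :=
    prod_nbij' (· + 1) (· - 1) (by simp) (by simp; omega) (by simp) (by simp; omega) (by simp)
  rw [muW, hx, hy, prod_union hxd, prod_union hyd, hshift, prod_div_distrib, prod_div_distrib]
  ring

theorem muW_pos (hq0 : 0 < q) (hq1 : q < 1) (hxy : ∀ i, 1 ≤ i → i ≤ m → x i < y i)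
    (hyx : ∀ i, 1 ≤ i → i ≤ m → y i < x (i + 1)) {k : ℕ} (hk1 : 1 ≤ k) (hk : k ≤ m + 1) :
    0 < muW q m x y k := by
  have hx := strictMonoOn_of_interlacing hxy hyx
  refine mul_pos (prod_pos fun i hi => div_pos ?_ ?_)
    (prod_pos fun i hi => div_pos_of_neg_of_neg ?_ ?_) <;> simp only [mem_Icc] at hi
  · have hxk : x (i + 1) ≤ x k := hx.monotoneOn ⟨by omega, by omega⟩ ⟨hk1, hk⟩ (by omega)
    exact one_sub_rpow_pos hq0 hq1 (sub_pos.2 ((hyx i hi.1 (by omega)).trans_le hxk))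
  · have hxk : x i < x k := (hx.lt_iff_lt ⟨hi.1, by omega⟩ ⟨hk1, hk⟩).2 (by omega)
    exact one_sub_rpow_pos hq0 hq1 (sub_pos.2 hxk)
  · have hxk : x k ≤ x (i - 1) := hx.monotoneOn ⟨hk1, hk⟩ ⟨by omega, by omega⟩ (by omega)
    exact one_sub_rpow_neg hq0 hq1 (sub_neg.2 (hxk.trans_lt (hxy (i - 1) (by omega) (by omega))))
  · have hxk : x k < x i := (hx.lt_iff_lt ⟨hk1, hk⟩ ⟨by omega, hi.2⟩).2 (by omega)
    exact one_sub_rpow_neg hq0 hq1 (sub_neg.2 hxk)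

end Interlacing

section Rgrow

variable {q : ℝ} {m : ℕ} {x y : ℕ → ℝ} {X : ℝ}

theorem Rgrow_zero :
    Rgrow q m x y X 0 = (1 - q) * (∏ i ∈ Icc 1 m, (1 - q ^ (X - y i))) /
      ∏ i ∈ Icc 1 (m + 1), (1 - q ^ (X - x i)) := by
  simp only [Rgrow, mul_zero, Real.sqrt_zero, sub_zero, add_zero, prod_mul_distrib]
  rcases eq_or_ne (∏ i ∈ Icc 1 (m + 1), (1 - q ^ (X - x i))) 0 with h | h
  · simp [h]
  · field_simp

theorem Rgrow_zero_pos (hq0 : 0 < q) (hq1 : q < 1) (hxX : ∀ k ∈ Icc 1 (m + 1), x k < X)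
    (hyX : ∀ i ∈ Icc 1 m, y i < X) : 0 < Rgrow q m x y X 0 := by
  rw [Rgrow_zero]
  refine div_pos (mul_pos (sub_pos.2 hq1) (prod_pos fun i hi => ?_)) (prod_pos fun k hk => ?_)
  · exact one_sub_rpow_pos hq0 hq1 (sub_pos.2 (hyX i hi))
  · exact one_sub_rpow_pos hq0 hq1 (sub_pos.2 (hxX k hk))

theorem Rgrow_zero_eq_sum (hq0 : 0 < q) (hq1 : q < 1) (hx : Set.InjOn x (Set.Icc 1 (m + 1)))
    (hxX : ∀ k ∈ Icc 1 (m + 1), x k < X) :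
    Rgrow q m x y X 0 = (1 - q) * ∑ k ∈ Icc 1 (m + 1), muW q m x y k / (1 - q ^ (X - x k)) := by
  rw [Rgrow_zero, mul_div_assoc]
  congr 1
  rw [sum_congr rfl fun k hk => by rw [muW_eq (mem_Icc.1 hk).1 (mem_Icc.1 hk).2]]
  simp only [rpow_sub hq0]
  refine prod_one_sub_div_div_prod_one_sub_div_eq_sum (u := fun i => q ^ x i) ?_
    (fun i _ => (rpow_pos_of_pos hq0 _).ne') (by simp)
    (fun k hk => (rpow_lt_rpow_of_exponent_gt hq0 hq1 (hxX k hk)).ne)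
  rw [coe_Icc]
  exact (strictAnti_rpow_of_base_lt_one hq0 hq1).injective.comp_injOn hx

theorem hasDerivAt_Rgrow_zero (hq0 : 0 < q) (hq1 : q < 1)
    (hx : Set.InjOn x (Set.Icc 1 (m + 1))) (hxX : ∀ k ∈ Icc 1 (m + 1), x k < X) :
    HasDerivAt (fun X' => Rgrow q m x y X' 0)
      ((1 - q) * (log q * ∑ k ∈ Icc 1 (m + 1),
        muW q m x y k * q ^ (X - x k) / (1 - q ^ (X - x k)) ^ 2)) X := by
  have hsum := (HasDerivAt.fun_sum fun k hk => hasDerivAt_div_one_sub_rpow_sub hq0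
    (muW q m x y k) (x k) X (rpow_lt_one hq0.le hq1 (sub_pos.2 (hxX k hk))).ne).const_mul (1 - q)
  rw [mul_sum]
  refine hsum.congr_of_eventuallyEq ?_
  filter_upwards [(eventually_all_finset _).2 fun k hk => eventually_gt_nhds (hxX k hk)]
    with X' hX'
  exact Rgrow_zero_eq_sum hq0 hq1 hx hX'

theorem hasDerivWithinAt_Rgrow (hq0 : 0 < q) (hq1 : q < 1)
    (hμ : ∀ k ∈ Icc 1 (m + 1), 0 ≤ muW q m x y k) (hxX : ∀ k ∈ Icc 1 (m + 1), x k < X) :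
    HasDerivWithinAt (fun t => Rgrow q m x y X t)
      (log q ^ 2 * (∑ k ∈ Icc 1 (m + 1),
        muW q m x y k * q ^ (X - x k) / (1 - q ^ (X - x k)) ^ 2) * Rgrow q m x y X 0)
      (Set.Ici 0) 0 := by
  have hF0 : ∀ k ∈ Icc 1 (m + 1), (1 - q ^ (X - x k - √(muW q m x y k * 0))) *
      (1 - q ^ (X - x k + √(muW q m x y k * 0))) = (1 - q ^ (X - x k)) ^ 2 := fun k _ => by
    simp [sq]
  have hne : ∀ k ∈ Icc 1 (m + 1), 1 - q ^ (X - x k) ≠ 0 := fun k hk =>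
    (one_sub_rpow_pos hq0 hq1 (sub_pos.2 (hxX k hk))).ne'
  refine (HasDerivWithinAt.const_div_finset_prod _
    (fun k hk => hasDerivWithinAt_one_sub_rpow_sub_sqrt_mul hq0 (X - x k) (hμ k hk))
    (fun k hk => by rw [hF0 k hk]; exact pow_ne_zero 2 (hne k hk))).congr_deriv ?_
  change -(Rgrow q m x y X 0) * _ = _
  rw [sum_congr rfl fun k hk => by rw [hF0 k hk]]
  simp only [mul_sum, sum_mul]
  exact sum_congr rfl fun k _ => by ring

end Rgrow

/-- For a growing rectangular diagram with interlacing data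
`x₁ < y₁ < ⋯ < y_m < x_{m+1}`, weights `μ_k(q)`, and `X > x_{m+1}`, the function
`t ↦ R(X,t)` has right derivative at `t = 0` equal to
`(ln q)²·(Σ_k μ_k q^{X−x_k}/(1 − q^{X−x_k})²)·R(X,0)`, and moreover
`d/dX[R(X,0)] + ((1−q)/ln(q⁻¹))·R(X,0)⁻¹·R'(0⁺) = 0`: the q-deformed R-function
satisfies the q-deformed Burgers equation infinitesimally at `t = 0`. -/
theorem stmt18 (q : ℝ) (hq : q ∈ Set.Ioo (0 : ℝ) 1) (m : ℕ) (x y : ℕ → ℝ)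
    (hxy : ∀ i, 1 ≤ i → i ≤ m → x i < y i)
    (hyx : ∀ i, 1 ≤ i → i ≤ m → y i < x (i + 1))
    (X : ℝ) (hX : x (m + 1) < X) :
    HasDerivWithinAt (fun t => Rgrow q m x y X t)
      ((Real.log q) ^ 2 *
          (∑ k ∈ Finset.Icc 1 (m + 1),
            muW q m x y k * q ^ (X - x k) / (1 - q ^ (X - x k)) ^ 2) *
        Rgrow q m x y X 0)
      (Set.Ici (0 : ℝ)) 0 ∧
    deriv (fun X' => Rgrow q m x y X' 0) X
        + (1 - q) / Real.log q⁻¹ * (Rgrow q m x y X 0)⁻¹ *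
            ((Real.log q) ^ 2 *
                (∑ k ∈ Finset.Icc 1 (m + 1),
                  muW q m x y k * q ^ (X - x k) / (1 - q ^ (X - x k)) ^ 2) *
              Rgrow q m x y X 0)
      = 0 := by
  obtain ⟨hq0, hq1⟩ := hq
  have hx := strictMonoOn_of_interlacing hxy hyx
  have hxX : ∀ k ∈ Icc 1 (m + 1), x k < X := fun k hk => by
    rw [mem_Icc] at hk
    exact (hx.monotoneOn ⟨hk.1, hk.2⟩ ⟨by omega, le_rfl⟩ hk.2).trans_lt hX
  have hyX : ∀ i ∈ Icc 1 m, y i < X := fun i hi => by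
    rw [mem_Icc] at hi
    exact (hyx i hi.1 hi.2).trans (hxX (i + 1) (mem_Icc.2 ⟨by omega, by omega⟩))
  have hR := (Rgrow_zero_pos hq0 hq1 hxX hyX).ne'
  have hlog := (log_neg hq0 hq1).ne
  refine ⟨hasDerivWithinAt_Rgrow hq0 hq1
    (fun k hk => (muW_pos hq0 hq1 hxy hyx (mem_Icc.1 hk).1 (mem_Icc.1 hk).2).le) hxX, ?_⟩
  rw [(hasDerivAt_Rgrow_zero hq0 hq1 hx.injOn hxX).deriv, log_inv]
  field_simp
  ring
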